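/- arXiv:2504.21115 — 2 statements merged into one kernel-verified Lean document; each statement's English description precedes it below -/
import Mathlib

section
/- For every positive integer t, every region intersection graph over a K_t-minor-free graph does not contain the 1-subdivision K_t^(1) of the complete graph K_t as an induced minor. -/
/-- A set of vertices is connected in `G` if the induced subgraph is connected
(in particular, it is nonempty). -/
def ConnectedIn {V : Type*} (G : SimpleGraph V) (S : Set V) : Prop :=
  (G.induce S).Connected

/-- `H` is a minor of `G`: there is a minor model of `H` in `G`, i.e. a family of
nonempty, connected, pairwise disjoint branch sets, with an edge of `G` between the
branch sets of any two vertices adjacent in `H`. -/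
def IsMinor {α β : Type*} (H : SimpleGraph α) (G : SimpleGraph β) : Prop :=
  ∃ φ : α → Set β,
    (∀ a, ConnectedIn G (φ a)) ∧
    (Pairwise fun a b => Disjoint (φ a) (φ b)) ∧
    (∀ a b : α, H.Adj a b → ∃ u ∈ φ a, ∃ v ∈ φ b, G.Adj u v)

/-- `H` is an induced minor of `G`: as for a minor model, but two distinct branch sets
are joined by an edge of `G` *iff* the corresponding vertices are adjacent in `H`. -/
def IsInducedMinor {α β : Type*} (H : SimpleGraph α) (G : SimpleGraph β) : Prop :=
  ∃ φ : α → Set β,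
    (∀ a, ConnectedIn G (φ a)) ∧
    (Pairwise fun a b => Disjoint (φ a) (φ b)) ∧
    (∀ a b : α, a ≠ b → (H.Adj a b ↔ ∃ u ∈ φ a, ∃ v ∈ φ b, G.Adj u v))

/-- `G` is a region intersection graph over `H`: every vertex `v` of `G` is assigned a
connected subgraph (region) `R v` of `H` such that two distinct vertices of `G` are
adjacent iff their regions intersect. -/
def IsRIG {α β : Type*} (G : SimpleGraph α) (H : SimpleGraph β) : Prop :=
  ∃ R : α → Set β,
    (∀ v, ConnectedIn H (R v)) ∧
    (∀ u v : α, u ≠ v → (G.Adj u v ↔ (R u ∩ R v).Nonempty))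

/-- Identification relation used to build the internal vertices of the `ℓ`-subdivision:
the `i`-th internal vertex of the edge directed as `(u, v)` equals the `(ℓ-1-i)`-th
internal vertex of the edge directed as `(v, u)`. -/
def SubdivRel {V : Type*} (G : SimpleGraph V) (ℓ : ℕ) :
    ({d : V × V // G.Adj d.1 d.2} × Fin ℓ) → ({d : V × V // G.Adj d.1 d.2} × Fin ℓ) → Prop :=
  fun a b => a.1.1.1 = b.1.1.2 ∧ a.1.1.2 = b.1.1.1 ∧ (a.2 : ℕ) + (b.2 : ℕ) + 1 = ℓ

/-- Vertices of the `ℓ`-subdivision of `G`: the branching (original) vertices together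
with `ℓ` internal (subdivision) vertices on each edge. -/
def SubdivVert {V : Type*} (G : SimpleGraph V) (ℓ : ℕ) : Type _ :=
  V ⊕ Quot (SubdivRel G ℓ)

/-- The `ℓ`-subdivision `G^(ℓ)` of `G`: every edge of `G` is replaced by a path with
`ℓ + 1` edges (so with `ℓ` new internal vertices). -/
def subdiv {V : Type*} (G : SimpleGraph V) (ℓ : ℕ) : SimpleGraph (SubdivVert G ℓ) :=
  SimpleGraph.fromRel (fun x y =>
    (ℓ = 0 ∧ ∃ u v : V, G.Adj u v ∧ x = Sum.inl u ∧ y = Sum.inl v) ∨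
    (∃ (d : {d : V × V // G.Adj d.1 d.2}) (i : Fin ℓ),
      (i : ℕ) = 0 ∧ x = Sum.inl d.1.1 ∧ y = Sum.inr (Quot.mk _ (d, i))) ∨
    (∃ (d : {d : V × V // G.Adj d.1 d.2}) (i j : Fin ℓ),
      (i : ℕ) + 1 = (j : ℕ) ∧ x = Sum.inr (Quot.mk _ (d, i)) ∧ y = Sum.inr (Quot.mk _ (d, j))))

/-!
Composing an induced-minor model of `F` in `G` with the regions of `G` over `H` shows that `F`
is itself a region intersection graph over `H`. For `F^(1)`, let `X i` be the region of the branch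
vertex `i` and `Y ij` the region of the subdivision vertex of the edge `ij`: the `X i` are pairwise
disjoint, among them `Y ij` meets exactly `X i` and `X j`, and distinct `Y`'s are disjoint.
Orient every edge as `i < j` for some well-order of the vertices and walk inside `Y ij` from `X i`
towards `X j`, stopping just before entering `X j`. Adding these pieces to `X i` gives pairwise disjoint connected branch sets `B i`
with an edge of `H` between `B i` and `B j` whenever `ij` is an edge, i.e. a minor model of `F`
in `H`.
-/

open SimpleGraph

namespace SubdivVert

variable {V : Type*} {F : SimpleGraph V}

def mid {u v : V} (h : F.Adj u v) : SubdivVert F 1 :=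
  Sum.inr (Quot.mk _ (⟨(u, v), h⟩, 0))

def baseEdge {ℓ : ℕ} : Quot (SubdivRel F ℓ) → Sym2 V :=
  Quot.lift (fun a => s(a.1.1.1, a.1.1.2)) fun a b h => by
    rw [h.1, h.2.1]; exact Sym2.eq_swap

lemma mid_comm {u v : V} (h : F.Adj u v) : mid h = mid h.symm :=
  congrArg Sum.inr (Quot.sound ⟨rfl, rfl, rfl⟩)

lemma sym2_eq_of_mid_eq {u v u' v' : V} {h : F.Adj u v} {h' : F.Adj u' v'}
    (he : mid h = mid h') : s(u, v) = s(u', v') :=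
  congrArg baseEdge (Sum.inr.inj he)

end SubdivVert

open SubdivVert

section SubdivOne

variable {V : Type*} {F : SimpleGraph V}

lemma subdiv_one_adj_inl_inl (u v : V) : ¬ (subdiv F 1).Adj (.inl u) (.inl v) := by
  rintro ⟨-, h | h⟩ <;> simp at h

lemma subdiv_one_adj_inr_inr (q q' : Quot (SubdivRel F 1)) :
    ¬ (subdiv F 1).Adj (.inr q) (.inr q') := by
  rintro ⟨-, h | h⟩ <;> simp at h

lemma subdiv_one_adj_inl_mid {k u v : V} (h : F.Adj u v) :
    (subdiv F 1).Adj (.inl k) (mid h) ↔ k = u ∨ k = v := by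
  constructor
  · rintro ⟨-, (⟨h0, -⟩ | ⟨d, i, -, hk, he⟩ | ⟨-, i, j, hij, -⟩) | h⟩
    · exact absurd h0 one_ne_zero
    · obtain rfl := Subsingleton.elim i 0
      rw [Sum.inl.inj hk]
      exact Sym2.mem_iff.1 (sym2_eq_of_mid_eq (h' := d.2) he ▸ Sym2.mem_mk_left _ _)
    · omega
    · simp at h
  · rintro (rfl | rfl)
    · exact ⟨Sum.inl_ne_inr, .inl (.inr (.inl ⟨⟨_, h⟩, 0, rfl, rfl, rfl⟩))⟩
    · rw [mid_comm]
      exact ⟨Sum.inl_ne_inr, .inl (.inr (.inl ⟨⟨_, h.symm⟩, 0, rfl, rfl, rfl⟩))⟩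

end SubdivOne

namespace ConnectedIn

variable {V : Type*} {G : SimpleGraph V}

lemma reachable_of_subset {C T : Set V} (hC : ConnectedIn G C) (hCT : C ⊆ T) {x y : V}
    (hx : x ∈ C) (hy : y ∈ C) : (G.induce T).Reachable ⟨x, hCT hx⟩ ⟨y, hCT hy⟩ :=
  (hC.preconnected ⟨x, hx⟩ ⟨y, hy⟩).map (induceHomOfLE G hCT).toHom

lemma singleton (x : V) : ConnectedIn G {x} := by
  rw [ConnectedIn, induce_singleton_eq_top]
  exact connected_top

lemma insert_of_adj {P : Set V} (hP : ConnectedIn G P) {x y : V} (hy : y ∈ P) (hxy : G.Adj x y) :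
    ConnectedIn G (insert x P) := by
  rw [← Set.singleton_union]
  exact connected_induce_union (singleton x).preconnected hP.preconnected rfl hy hxy

lemma union_iUnion {ι : Type*} {X : Set V} {P : ι → Set V} (hX : ConnectedIn G X)
    (hP : ∀ i, ConnectedIn G (P i)) (hXP : ∀ i, (X ∩ P i).Nonempty) :
    ConnectedIn G (X ∪ ⋃ i, P i) := by
  obtain ⟨⟨x, hx⟩⟩ := hX.nonempty
  refine induce_connected_of_patches x (.inl hx) fun {v} hv => ?_
  rcases hv with hv | hv
  · exact ⟨X, Set.subset_union_left, hx, hv, hX.preconnected _ _⟩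
  · obtain ⟨i, hvi⟩ := Set.mem_iUnion.1 hv
    refine ⟨X ∪ P i, Set.union_subset_union_right X (Set.subset_iUnion P i), .inl hx, .inr hvi,
      ?_⟩
    exact (induce_union_connected hX.preconnected (hP i).preconnected (hXP i)).preconnected _ _

lemma biUnion {β : Type*} {H : SimpleGraph β} {S : Set V} {R : V → Set β}
    (hS : ConnectedIn G S) (hR : ∀ v ∈ S, ConnectedIn H (R v))
    (hRadj : ∀ u ∈ S, ∀ v ∈ S, G.Adj u v → (R u ∩ R v).Nonempty) :
    ConnectedIn H (⋃ v ∈ S, R v) := by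
  have hsub (v : S) : R v ⊆ ⋃ v ∈ S, R v := Set.subset_biUnion_of_mem v.2
  have hwalk {a b : S} (w : (G.induce S).Walk a b) {x y : β} (hx : x ∈ R a) (hy : y ∈ R b) :
      (H.induce (⋃ v ∈ S, R v)).Reachable ⟨x, hsub a hx⟩ ⟨y, hsub b hy⟩ := by
    induction w generalizing x with
    | nil => exact (hR _ (Subtype.prop _)).reachable_of_subset (hsub _) hx hy
    | @cons a c b hac _ ih =>
      obtain ⟨z, hza, hzc⟩ := hRadj a a.2 c c.2 hac
      exact ((hR _ a.2).reachable_of_subset (hsub a) hx hza).trans (ih hzc hy)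
  obtain ⟨⟨s, hs⟩⟩ := hS.nonempty
  obtain ⟨⟨z, hz⟩⟩ := (hR s hs).nonempty
  refine connected_iff_exists_forall_reachable _ |>.2 ⟨⟨z, hsub ⟨s, hs⟩ hz⟩, ?_⟩
  rintro ⟨y, hy⟩
  obtain ⟨v, hv, hyv⟩ := Set.mem_iUnion₂.1 hy
  exact hwalk (hS.preconnected ⟨s, hs⟩ ⟨v, hv⟩).some hz hyv

lemma exists_subset_sdiff_adj {Y T : Set V} (hY : ConnectedIn G Y) {x y : V} (hxY : x ∈ Y)
    (hxT : x ∉ T) (hyY : y ∈ Y) (hyT : y ∈ T) :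
    ∃ P ⊆ Y \ T, x ∈ P ∧ ConnectedIn G P ∧ ∃ p ∈ P, ∃ q ∈ T, G.Adj p q := by
  have hwalk {a b : Y} (w : (G.induce Y).Walk a b) (ha : a.1 ∉ T) (hb : b.1 ∈ T) :
      ∃ P ⊆ Y \ T, a.1 ∈ P ∧ ConnectedIn G P ∧ ∃ p ∈ P, ∃ q ∈ T, G.Adj p q := by
    induction w with
    | nil => exact absurd hb ha
    | @cons a c b hac _ ih =>
      by_cases hc : c.1 ∈ T
      · exact ⟨{a.1}, Set.singleton_subset_iff.2 ⟨a.2, ha⟩, rfl, singleton _, a, rfl, c, hc,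
          hac⟩
      · obtain ⟨P, hPsub, hcP, hP, p, hp, q, hq, hpq⟩ := ih hc hb
        exact ⟨insert a.1 P, Set.insert_subset ⟨a.2, ha⟩ hPsub, Set.mem_insert _ _,
          hP.insert_of_adj hcP hac, p, Set.mem_insert_of_mem _ hp, q, hq, hpq⟩
  exact hwalk (hY.preconnected ⟨x, hxY⟩ ⟨y, hyY⟩).some hxT hyT

end ConnectedIn

section RIG

variable {α β γ : Type*} {G : SimpleGraph α} {H : SimpleGraph β}

lemma disjoint_regions_of_not_adj {R : α → Set β}
    (hR : ∀ u v, u ≠ v → (G.Adj u v ↔ (R u ∩ R v).Nonempty))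
    {u v : α} (huv : u ≠ v) (hadj : ¬ G.Adj u v) : Disjoint (R u) (R v) :=
  Set.disjoint_iff_inter_eq_empty.2 <| Set.not_nonempty_iff_eq_empty.1 <| (hR u v huv).not.1 hadj

theorem IsRIG.of_isInducedMinor {F : SimpleGraph γ} (hG : IsRIG G H) (hF : IsInducedMinor F G) :
    IsRIG F H := by
  obtain ⟨φ, hφconn, hφdisj, hφadj⟩ := hF
  obtain ⟨R, hRconn, hRadj⟩ := hG
  refine ⟨fun a => ⋃ v ∈ φ a, R v,
    fun a => (hφconn a).biUnion (fun v _ => hRconn v) fun u _ v _ huv => (hRadj u v huv.ne).1 huv,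
    fun a b hab => (hφadj a b hab).trans ⟨?_, ?_⟩⟩
  · rintro ⟨u, hu, v, hv, huv⟩
    obtain ⟨z, hzu, hzv⟩ := (hRadj u v huv.ne).1 huv
    exact ⟨z, Set.mem_biUnion hu hzu, Set.mem_biUnion hv hzv⟩
  · rintro ⟨z, hza, hzb⟩
    obtain ⟨u, hu, hzu⟩ := Set.mem_iUnion₂.1 hza
    obtain ⟨v, hv, hzv⟩ := Set.mem_iUnion₂.1 hzb
    have huv : u ≠ v := by
      rintro rfl
      exact Set.disjoint_left.1 (hφdisj hab) hu hv
    exact ⟨u, hu, v, hv, (hRadj u v huv).2 ⟨z, hzu, hzv⟩⟩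

end RIG

section SubdivOneRegions

variable {V β : Type*} {F : SimpleGraph V} {H : SimpleGraph β} {W : SubdivVert F 1 → Set β}

lemma region_inl_inter_mid_nonempty
    (hW : ∀ a b, a ≠ b → ((subdiv F 1).Adj a b ↔ (W a ∩ W b).Nonempty)) {u v : V}
    (h : F.Adj u v) : (W (.inl u) ∩ W (mid h)).Nonempty :=
  (hW _ _ Sum.inl_ne_inr).1 ((subdiv_one_adj_inl_mid h).2 (.inl rfl))

lemma disjoint_region_inl_inl
    (hW : ∀ a b, a ≠ b → ((subdiv F 1).Adj a b ↔ (W a ∩ W b).Nonempty)) {u v : V}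
    (huv : u ≠ v) : Disjoint (W (.inl u)) (W (.inl v)) :=
  disjoint_regions_of_not_adj hW (Sum.inl_injective.ne huv) (subdiv_one_adj_inl_inl u v)

lemma disjoint_region_inl_mid
    (hW : ∀ a b, a ≠ b → ((subdiv F 1).Adj a b ↔ (W a ∩ W b).Nonempty)) {i j k : V}
    (h : F.Adj j k) (hij : i ≠ j) (hik : i ≠ k) : Disjoint (W (.inl i)) (W (mid h)) :=
  disjoint_regions_of_not_adj hW Sum.inl_ne_inr ((subdiv_one_adj_inl_mid h).not.2 (by tauto))

lemma disjoint_region_mid_mid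
    (hW : ∀ a b, a ≠ b → ((subdiv F 1).Adj a b ↔ (W a ∩ W b).Nonempty)) {i j k l : V}
    (hik : F.Adj i k) (hjl : F.Adj j l) (hne : s(i, k) ≠ s(j, l)) :
    Disjoint (W (mid hik)) (W (mid hjl)) :=
  disjoint_regions_of_not_adj hW (mt sym2_eq_of_mid_eq hne) (subdiv_one_adj_inr_inr _ _)

lemma exists_piece_of_regions (hWconn : ∀ a, ConnectedIn H (W a))
    (hW : ∀ a b, a ≠ b → ((subdiv F 1).Adj a b ↔ (W a ∩ W b).Nonempty)) {u v : V}
    (h : F.Adj u v) : ∃ P ⊆ W (mid h) \ W (.inl v), (W (.inl u) ∩ P).Nonempty ∧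
      ConnectedIn H P ∧ ∃ p ∈ P, ∃ q ∈ W (.inl v), H.Adj p q := by
  obtain ⟨x, hxu, hx⟩ := region_inl_inter_mid_nonempty hW h
  obtain ⟨y, hyv, hy⟩ := region_inl_inter_mid_nonempty hW h.symm
  obtain ⟨P, hPsub, hxP, hP, hadj⟩ := (hWconn (mid h)).exists_subset_sdiff_adj hx
    (Set.disjoint_left.1 (disjoint_region_inl_inl hW h.ne) hxu) (mid_comm h ▸ hy) hyv
  exact ⟨P, hPsub, ⟨x, hxu, hxP⟩, hP, hadj⟩

theorem IsRIG.isMinor_of_subdiv_one (hF : IsRIG (subdiv F 1) H) : IsMinor F H := by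
  let _ : LinearOrder V := IsWellOrder.linearOrder WellOrderingRel
  obtain ⟨W, hWconn, hW⟩ := hF
  choose P hPsub hPmeet hPconn hPadj using
    fun u v (h : F.Adj u v) => exists_piece_of_regions hWconn hW h
  have hXP {i j k : V} (h : F.Adj j k) (hij : i ≠ j) : Disjoint (W (.inl i)) (P j k h) := by
    by_cases hik : i = k
    · subst hik
      exact Set.disjoint_sdiff_right.mono_right (hPsub j i h)
    · exact (disjoint_region_inl_mid hW h hij hik).mono_right
        ((hPsub j k h).trans Set.sdiff_subset)
  have hPP {i j k l : V} (hik : F.Adj i k) (hjl : F.Adj j l) (hij : i ≠ j) (hk : i < k)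
      (hl : j < l) : Disjoint (P i k hik) (P j l hjl) := by
    have hne : s(i, k) ≠ s(j, l) := by
      rw [Ne, Sym2.eq_iff]
      rintro (⟨rfl, -⟩ | ⟨rfl, rfl⟩)
      exacts [hij rfl, lt_asymm hk hl]
    exact (disjoint_region_mid_mid hW hik hjl hne).mono
      ((hPsub i k hik).trans Set.sdiff_subset) ((hPsub j l hjl).trans Set.sdiff_subset)
  refine ⟨fun i => W (.inl i) ∪ ⋃ j : {j // F.Adj i j ∧ i < j}, P i j j.2.1,
    fun i => (hWconn _).union_iUnion (fun j => hPconn _ _ _) (fun j => hPmeet _ _ _),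
    fun i j hij => ?_, fun i j h => ?_⟩
  · simp only [Set.disjoint_union_left, Set.disjoint_union_right, Set.disjoint_iUnion_left,
      Set.disjoint_iUnion_right]
    exact ⟨⟨disjoint_region_inl_inl hW hij, fun k => (hXP _ (Ne.symm hij)).symm⟩,
      fun l => ⟨hXP _ hij, fun k => hPP _ _ hij k.2.2 l.2.2⟩⟩
  · rcases lt_or_gt_of_ne h.ne with hlt | hlt
    · obtain ⟨p, hp, q, hq, hpq⟩ := hPadj i j h
      exact ⟨p, .inr (Set.mem_iUnion.2 ⟨⟨j, h, hlt⟩, hp⟩), q, .inl hq, hpq⟩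
    · obtain ⟨p, hp, q, hq, hpq⟩ := hPadj j i h.symm
      exact ⟨q, .inl hq, p, .inr (Set.mem_iUnion.2 ⟨⟨i, h.symm, hlt⟩, hp⟩), hpq.symm⟩

end SubdivOneRegions

theorem statement3_general (t : ℕ) {α β : Type*}
    (G : SimpleGraph α) (H : SimpleGraph β)
    (hH : ¬ IsMinor (SimpleGraph.completeGraph (Fin t)) H) (hG : IsRIG G H) :
    ¬ IsInducedMinor (subdiv (SimpleGraph.completeGraph (Fin t)) 1) G :=
  fun hK => hH (hG.of_isInducedMinor hK).isMinor_of_subdiv_one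

/-- For every positive integer `t`, every region intersection graph over a
`K_t`-minor-free graph does not contain the 1-subdivision `K_t^(1)` of `K_t` as an
induced minor. -/
theorem statement3 (t : ℕ) (ht : 0 < t) {α β : Type*}
    (G : SimpleGraph α) (H : SimpleGraph β)
    (hH : ¬ IsMinor (SimpleGraph.completeGraph (Fin t)) H) (hG : IsRIG G H) :
    ¬ IsInducedMinor (subdiv (SimpleGraph.completeGraph (Fin t)) 1) G :=
  statement3_general t G H hH hG
end

section
/- Let G be a region intersection graph over a graph H witnessed by connected subgraphs (R_v)_{v∈V(G)}, let (W_x : x ∈ V(T)) be a tree-decomposition of H of adhesion at most ℓ, and let W ⊆ V(G) be a set such that for every pair of distinct vertices u, v ∈ W there exist ℓ+1 pairwise anti-complete subsets Q_1,…,Q_{ℓ+1} of V(G) \ {u,v}, each inducing a connected subgraph of G and each containing a neighbor of u and a neighbor of v. Then there exists a node x ∈ V(T) such that the bag W_x intersects V(R_v) for every v ∈ W. -/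
/-!
For each `v`, the nodes of `T` whose bags meet `R v` form a subtree `T_v`, and subtrees of a tree
have the Helly property, so it suffices that any two of them meet. If `T_u` and `T_v` were
disjoint, an edge `xz` of `T` would separate them (sides of `xz` being the components of
`T - xz`), and every connected subset of `H` meeting both `R u` and `R v` would then meet the
adhesion set `Wb x ∩ Wb z`. The sets `⋃ a ∈ Q i, R a` are such subsets, and they are pairwise
disjoint because the `Q i` are pairwise disjoint and anti-complete, so the adhesion set would
have `ℓ + 1` elements.
-/

open SimpleGraph

section Connectivity

variable {V : Type*} {G : SimpleGraph V} {S : Set V}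

protected theorem ConnectedIn.nonempty (h : ConnectedIn G S) : S.Nonempty :=
  Set.nonempty_coe_sort.1 (SimpleGraph.Connected.nonempty h)

theorem ConnectedIn.exists_walk (h : ConnectedIn G S) {a b : V} (ha : a ∈ S) (hb : b ∈ S) :
    ∃ p : G.Walk a b, ∀ v ∈ p.support, v ∈ S := by
  obtain ⟨p⟩ := SimpleGraph.Connected.preconnected h ⟨a, ha⟩ ⟨b, hb⟩
  refine ⟨p.map (Embedding.induce S).toHom, fun v hv => ?_⟩
  obtain ⟨⟨w, hw⟩, -, rfl⟩ :=
    List.mem_map.1 (p.support_map (Embedding.induce S).toHom ▸ hv)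
  exact hw

theorem connectedIn_of_exists_walk (hS : S.Nonempty)
    (h : ∀ a ∈ S, ∀ b ∈ S, ∃ p : G.Walk a b, ∀ v ∈ p.support, v ∈ S) :
    ConnectedIn G S := by
  obtain ⟨a, ha⟩ := hS
  refine G.induce_connected_of_patches a ha fun {b} hb => ?_
  obtain ⟨p, hp⟩ := h a ha b hb
  exact ⟨{v | v ∈ p.support}, hp, p.start_mem_support, p.end_mem_support,
    p.connected_induce_support _ _⟩

theorem connectedIn_univ_iff : ConnectedIn G Set.univ ↔ G.Connected :=
  G.induceUnivIso.connected_iff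

theorem ConnectedIn.biUnion_s10 {κ : Type*} {K : SimpleGraph κ} {F : V → Set κ}
    (hS : ConnectedIn G S) (hF : ∀ a ∈ S, ConnectedIn K (F a))
    (hadj : ∀ a ∈ S, ∀ b ∈ S, G.Adj a b → (F a ∩ F b).Nonempty) :
    ConnectedIn K (⋃ a ∈ S, F a) := by
  have hwalk : ∀ {a b : V} (p : G.Walk a b), (∀ c ∈ p.support, c ∈ S) →
      ConnectedIn K (⋃ c ∈ p.support, F c) := by
    intro a b p hp
    induction p with
    | nil => simpa using hF _ (hp _ (by simp))
    | @cons a b c hab p ih =>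
      simp only [Walk.support_cons, List.mem_cons, Set.iUnion_iUnion_eq_or_left] at hp ⊢
      have hb : b ∈ S := hp b (Or.inr p.start_mem_support)
      obtain ⟨y, hya, hyb⟩ := hadj a (hp a (Or.inl rfl)) b hb hab
      exact induce_union_connected (hF a (hp a (Or.inl rfl))).preconnected
        (ih fun c hc => hp c (Or.inr hc)).preconnected
        ⟨y, hya, Set.mem_biUnion p.start_mem_support hyb⟩
  obtain ⟨a, ha⟩ := hS.nonempty
  obtain ⟨u, hu⟩ := (hF a ha).nonempty
  refine K.induce_connected_of_patches u (Set.mem_biUnion ha hu) fun {v} hv => ?_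
  obtain ⟨b, hb, hvb⟩ := Set.mem_iUnion₂.1 hv
  obtain ⟨p, hp⟩ := hS.exists_walk ha hb
  exact ⟨_, Set.biUnion_subset_biUnion_left hp, Set.mem_biUnion p.start_mem_support hu,
    Set.mem_biUnion p.end_mem_support hvb, SimpleGraph.Connected.preconnected (hwalk p hp) _ _⟩

theorem ConnectedIn.mem_of_not_reachable_deleteEdges (hS : ConnectedIn G S) {x z t s : V}
    (ht : t ∈ S) (hs : s ∈ S) (h : ¬(G.deleteEdges {s(x, z)}).Reachable t s) :
    x ∈ S ∧ z ∈ S := by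
  obtain ⟨p, hp⟩ := hS.exists_walk ht hs
  have he : s(x, z) ∈ p.edges := by
    by_contra he
    exact h (reachable_deleteEdges_iff_exists_walk.2 ⟨p, he⟩)
  exact ⟨hp _ (p.fst_mem_support_of_mem_edges he), hp _ (p.snd_mem_support_of_mem_edges he)⟩

theorem SimpleGraph.Walk.exists_adj_last_exit {a b : V} (p : G.Walk a b)
    (hS : ∃ v ∈ p.support, v ∈ S) (hb : b ∉ S) :
    ∃ x z, G.Adj x z ∧ x ∈ S ∧ ∃ q : G.Walk z b, ∀ v ∈ q.support, v ∉ S := by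
  induction p with
  | nil =>
    obtain ⟨v, hv, hvS⟩ := hS
    rw [Walk.support_nil, List.mem_singleton] at hv
    exact absurd (hv ▸ hvS) hb
  | cons h p ih =>
    by_cases hp : ∃ v ∈ p.support, v ∈ S
    · exact ih hp hb
    · push Not at hp
      obtain ⟨v, hv, hvS⟩ := hS
      rw [Walk.support_cons, List.mem_cons] at hv
      rcases hv with rfl | hv
      · exact ⟨_, _, h, hvS, p, hp⟩
      · exact absurd hvS (hp v hv)

end Connectivity

namespace SimpleGraph.IsTree

variable {τ : Type*} {T : SimpleGraph τ}

theorem connectedIn_inter (hT : T.IsTree) {A B : Set τ} (hA : ConnectedIn T A)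
    (hB : ConnectedIn T B) (hAB : (A ∩ B).Nonempty) : ConnectedIn T (A ∩ B) := by
  classical
  refine connectedIn_of_exists_walk hAB fun a ha b hb => ?_
  obtain ⟨p, hp⟩ := hA.exists_walk ha.1 hb.1
  obtain ⟨q, hq⟩ := hB.exists_walk ha.2 hb.2
  have hpq : (p.toPath : T.Walk a b) = q.toPath :=
    (hT.existsUnique_path a b).unique p.toPath.2 q.toPath.2
  refine ⟨p.toPath, fun v hv => ⟨hp v (p.support_toPath_subset_support hv), ?_⟩⟩
  exact hq v (q.support_toPath_subset_support (hpq ▸ hv))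

theorem exists_separating_edge (hT : T.IsTree) {X Y : Set τ} (hX : ConnectedIn T X)
    (hY : ConnectedIn T Y) (hXY : Disjoint X Y) :
    ∃ x z, T.Adj x z ∧ x ∈ X ∧ z ∉ X ∧
      ∀ t ∈ X, ∀ y ∈ Y, ¬(T.deleteEdges {s(x, z)}).Reachable t y := by
  obtain ⟨x₀, hx₀⟩ := hX.nonempty
  obtain ⟨y₀, hy₀⟩ := hY.nonempty
  obtain ⟨p⟩ := hT.connected.preconnected x₀ y₀
  obtain ⟨x, z, hxz, hx, q, hq⟩ :=
    p.exists_adj_last_exit ⟨x₀, p.start_mem_support, hx₀⟩ (Set.disjoint_right.1 hXY hy₀)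
  have hz : z ∉ X := hq z q.start_mem_support
  have hzy₀ : (T.deleteEdges {s(x, z)}).Reachable z y₀ :=
    reachable_deleteEdges_iff_exists_walk.2
      ⟨q, fun he => hq x (q.fst_mem_support_of_mem_edges he) hx⟩
  have hbridge : ¬(T.deleteEdges {s(x, z)}).Reachable x z :=
    isBridge_iff.1 (isAcyclic_iff_forall_adj_isBridge.1 hT.isAcyclic hxz)
  have hXx : ∀ t ∈ X, (T.deleteEdges {s(x, z)}).Reachable t x := fun t ht => by
    obtain ⟨r, hr⟩ := hX.exists_walk ht hx
    exact reachable_deleteEdges_iff_exists_walk.2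
      ⟨r, fun he => hz (hr _ (r.snd_mem_support_of_mem_edges he))⟩
  -- a vertex of `Y` on the side of `x` would put `x` into the connected set `Y`
  have hYy₀ : ∀ y ∈ Y, (T.deleteEdges {s(x, z)}).Reachable y y₀ := fun y hy => by
    by_contra h
    exact Set.disjoint_left.1 hXY hx (hY.mem_of_not_reachable_deleteEdges hy hy₀ h).1
  refine ⟨x, z, hxz, hx, hz, fun t ht y hy hty => hbridge ?_⟩
  exact (((hXx t ht).symm.trans hty).trans (hYy₀ y hy)).trans hzy₀.symm

theorem inter_inter_nonempty (hT : T.IsTree) {A B C : Set τ} (hA : ConnectedIn T A)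
    (hB : ConnectedIn T B) (hC : ConnectedIn T C) (hAB : (A ∩ B).Nonempty)
    (hAC : (A ∩ C).Nonempty) (hBC : (B ∩ C).Nonempty) : (A ∩ B ∩ C).Nonempty := by
  by_contra h
  obtain ⟨x, z, -, -, hz, hsep⟩ := hT.exists_separating_edge (hT.connectedIn_inter hA hB hAB) hC
    (Set.disjoint_iff_inter_eq_empty.2 (Set.not_nonempty_iff_eq_empty.1 h))
  obtain ⟨a, haA, haB⟩ := hAB
  obtain ⟨b, hbA, hbC⟩ := hAC
  obtain ⟨c, hcB, hcC⟩ := hBC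
  exact hz ⟨(hA.mem_of_not_reachable_deleteEdges haA hbA (hsep a ⟨haA, haB⟩ b hbC)).2,
    (hB.mem_of_not_reachable_deleteEdges haB hcB (hsep a ⟨haA, haB⟩ c hcC)).2⟩

theorem exists_mem_inter_of_pairwise_inter_nonempty (hT : T.IsTree) {ι : Type*} {s : Set ι}
    (hs : s.Finite) {S : ι → Set τ} (hS : ∀ i ∈ s, ConnectedIn T (S i))
    (hpair : ∀ i ∈ s, ∀ j ∈ s, (S i ∩ S j).Nonempty) {U : Set τ} (hU : ConnectedIn T U)
    (hUS : ∀ i ∈ s, (U ∩ S i).Nonempty) : ∃ x ∈ U, ∀ i ∈ s, x ∈ S i := by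
  induction s, hs using Set.Finite.induction_on generalizing U with
  | empty =>
    obtain ⟨x, hx⟩ := hU.nonempty
    exact ⟨x, hx, by simp⟩
  | @insert a s _ _ ih =>
    have ha : a ∈ insert a s := s.mem_insert a
    have hs : ∀ i ∈ s, i ∈ insert a s := fun i hi => Set.mem_insert_of_mem a hi
    have hUa : ConnectedIn T (U ∩ S a) := hT.connectedIn_inter hU (hS a ha) (hUS a ha)
    obtain ⟨x, ⟨hxU, hxa⟩, hx⟩ := ih (fun i hi => hS i (hs i hi))
      (fun i hi j hj => hpair i (hs i hi) j (hs j hj)) hUa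
      fun i hi => hT.inter_inter_nonempty hU (hS a ha) (hS i (hs i hi)) (hUS a ha)
        (hUS i (hs i hi)) (hpair a ha i (hs i hi))
    exact ⟨x, hxU, Set.forall_mem_insert.2 ⟨hxa, hx⟩⟩

theorem exists_mem_of_pairwise_inter_nonempty (hT : T.IsTree) {ι : Type*} {s : Set ι}
    (hs : s.Finite) {S : ι → Set τ} (hS : ∀ i ∈ s, ConnectedIn T (S i))
    (hpair : ∀ i ∈ s, ∀ j ∈ s, (S i ∩ S j).Nonempty) : ∃ x, ∀ i ∈ s, x ∈ S i := by
  obtain ⟨x, -, hx⟩ := hT.exists_mem_inter_of_pairwise_inter_nonempty hs hS hpair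
    (connectedIn_univ_iff.2 hT.connected) fun i hi => by
      simpa using (hpair i hi i hi).mono Set.inter_subset_left
  exact ⟨x, hx⟩

end SimpleGraph.IsTree

theorem ENat.card_le_encard_of_pairwise_disjoint {ι κ : Type*} {C : ι → Set κ} {S : Set κ}
    (hC : Pairwise fun i j => Disjoint (C i) (C j)) (hS : ∀ i, (C i ∩ S).Nonempty) :
    ENat.card ι ≤ S.encard := by
  choose f hfC hfS using hS
  have hf : f.Injective := fun i j hij => by
    by_contra hne
    exact Set.disjoint_left.1 (hC hne) (hfC i) (hij ▸ hfC j)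
  exact hf.encard_range.trans (Set.encard_le_encard (Set.range_subset_iff.2 hfS))

section TreeDecomposition

variable {β τ : Type*}

structure IsTreeDecomposition (H : SimpleGraph β) (T : SimpleGraph τ) (B : τ → Set β) :
    Prop where
  isTree : T.IsTree
  exists_mem_bag_of_adj : ∀ a b, H.Adj a b → ∃ x, a ∈ B x ∧ b ∈ B x
  connectedIn_bags : ∀ b, ConnectedIn T {x | b ∈ B x}

def bagsMeeting (B : τ → Set β) (R : Set β) : Set τ :=
  {x | (B x ∩ R).Nonempty}

namespace IsTreeDecomposition

variable {H : SimpleGraph β} {T : SimpleGraph τ} {B : τ → Set β}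

theorem connectedIn_bagsMeeting (hD : IsTreeDecomposition H T B) {R : Set β}
    (hR : ConnectedIn H R) : ConnectedIn T (bagsMeeting B R) := by
  have hunion : bagsMeeting B R = ⋃ b ∈ R, {x | b ∈ B x} := by
    ext x
    simp [bagsMeeting, Set.Nonempty, and_comm]
  rw [hunion]
  exact hR.biUnion_s10 (fun b _ => hD.connectedIn_bags b) fun a _ b _ hab =>
    hD.exists_mem_bag_of_adj a b hab

theorem exists_mem_support_mem_inter (hD : IsTreeDecomposition H T B) {x z : τ} {b b' : β}
    (p : H.Walk b b') {t t' : τ} (ht : b ∈ B t) (ht' : b' ∈ B t')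
    (h : ¬(T.deleteEdges {s(x, z)}).Reachable t t') :
    ∃ c ∈ p.support, c ∈ B x ∧ c ∈ B z := by
  induction p generalizing t with
  | nil =>
    exact ⟨_, Walk.start_mem_support _,
      (hD.connectedIn_bags _).mem_of_not_reachable_deleteEdges ht ht' h⟩
  | cons hbc p ih =>
    obtain ⟨s, hbs, hcs⟩ := hD.exists_mem_bag_of_adj _ _ hbc
    by_cases hts : (T.deleteEdges {s(x, z)}).Reachable t s
    · obtain ⟨c, hc, hcxz⟩ := ih hcs ht' fun hst' => h (hts.trans hst')
      exact ⟨c, List.mem_cons_of_mem _ hc, hcxz⟩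
    · exact ⟨_, Walk.start_mem_support _,
        (hD.connectedIn_bags _).mem_of_not_reachable_deleteEdges ht hbs hts⟩

theorem exists_adj_forall_inter_nonempty (hD : IsTreeDecomposition H T B) {U V : Set β}
    (hU : ConnectedIn H U) (hV : ConnectedIn H V)
    (hUV : Disjoint (bagsMeeting B U) (bagsMeeting B V)) :
    ∃ x z, T.Adj x z ∧ ∀ C, ConnectedIn H C → (C ∩ U).Nonempty → (C ∩ V).Nonempty →
      (C ∩ (B x ∩ B z)).Nonempty := by
  obtain ⟨x, z, hxz, -, -, hsep⟩ := hD.isTree.exists_separating_edge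
    (hD.connectedIn_bagsMeeting hU) (hD.connectedIn_bagsMeeting hV) hUV
  refine ⟨x, z, hxz, fun C hC ⟨b, hbC, hbU⟩ ⟨b', hb'C, hb'V⟩ => ?_⟩
  obtain ⟨p, hp⟩ := hC.exists_walk hbC hb'C
  obtain ⟨t, ht⟩ := (hD.connectedIn_bags b).nonempty
  obtain ⟨t', ht'⟩ := (hD.connectedIn_bags b').nonempty
  obtain ⟨c, hc, hcxz⟩ := hD.exists_mem_support_mem_inter p ht ht'
    (hsep t ⟨b, ht, hbU⟩ t' ⟨b', ht', hb'V⟩)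
  exact ⟨c, hp c hc, hcxz⟩

theorem bagsMeeting_inter_nonempty (hD : IsTreeDecomposition H T B) {ι : Type*}
    (hadh : ∀ x y, T.Adj x y → (B x ∩ B y).encard < ENat.card ι) {U V : Set β}
    (hU : ConnectedIn H U) (hV : ConnectedIn H V) {C : ι → Set β}
    (hC : ∀ i, ConnectedIn H (C i)) (hdisj : Pairwise fun i j => Disjoint (C i) (C j))
    (hCU : ∀ i, (C i ∩ U).Nonempty) (hCV : ∀ i, (C i ∩ V).Nonempty) :
    (bagsMeeting B U ∩ bagsMeeting B V).Nonempty := by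
  by_contra h
  obtain ⟨x, z, hxz, hmeet⟩ := hD.exists_adj_forall_inter_nonempty hU hV
    (Set.disjoint_iff_inter_eq_empty.2 (Set.not_nonempty_iff_eq_empty.1 h))
  exact (hadh x z hxz).not_ge
    (ENat.card_le_encard_of_pairwise_disjoint hdisj fun i => hmeet _ (hC i) (hCU i) (hCV i))

end IsTreeDecomposition

end TreeDecomposition

section RegionIntersection

variable {α β : Type*} {G : SimpleGraph α} {R : α → Set β}

theorem disjoint_biUnion_of_forall_not_adj
    (hrig : ∀ a b, a ≠ b → (G.Adj a b ↔ (R a ∩ R b).Nonempty)) {P Q : Set α}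
    (hPQ : Disjoint P Q) (hanti : ∀ a ∈ P, ∀ b ∈ Q, ¬G.Adj a b) :
    Disjoint (⋃ a ∈ P, R a) (⋃ b ∈ Q, R b) := by
  simp only [Set.disjoint_iUnion₂_left, Set.disjoint_iUnion₂_right]
  intro b hb a ha
  have hab : a ≠ b := by rintro rfl; exact Set.disjoint_left.1 hPQ ha hb
  rw [Set.disjoint_iff_inter_eq_empty, ← Set.not_nonempty_iff_eq_empty, ← hrig a b hab]
  exact hanti a ha b hb

theorem biUnion_inter_nonempty_of_adj
    (hrig : ∀ a b, a ≠ b → (G.Adj a b ↔ (R a ∩ R b).Nonempty)) {Q : Set α} {u a : α}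
    (ha : a ∈ Q) (hua : G.Adj u a) : ((⋃ b ∈ Q, R b) ∩ R u).Nonempty := by
  obtain ⟨y, hyu, hya⟩ := (hrig u a hua.ne).1 hua
  exact ⟨y, Set.mem_biUnion ha hya, hyu⟩

end RegionIntersection

/-- Let `G` be a (finite) region intersection graph over `H` witnessed by regions `R`,
let `(Wb x : x ∈ V(T))` be a tree-decomposition of `H` of adhesion at most `ℓ`, and let
`W ⊆ V(G)` be such that any two distinct `u, v ∈ W` are joined by `ℓ + 1` pairwise
anti-complete connected subsets of `V(G) \ {u, v}`, each containing a neighbor of `u`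
and a neighbor of `v`.  Then some bag `Wb x` intersects `R v` for every `v ∈ W`. -/
theorem statement10 {α β τ : Type*} [Fintype α]
    (G : SimpleGraph α) (H : SimpleGraph β)
    (R : α → Set β)
    (hRconn : ∀ w, ConnectedIn H (R w))
    (hrig : ∀ w w' : α, w ≠ w' → (G.Adj w w' ↔ (R w ∩ R w').Nonempty))
    (T : SimpleGraph τ) (hT : T.IsTree) (Wb : τ → Set β)
    (hedges : ∀ a b : β, H.Adj a b → ∃ x : τ, a ∈ Wb x ∧ b ∈ Wb x)
    (hsubtree : ∀ b : β, ConnectedIn T {x : τ | b ∈ Wb x})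
    (ℓ : ℕ)
    (hadh : ∀ x y : τ, T.Adj x y → (Wb x ∩ Wb y).encard ≤ (ℓ : ℕ∞))
    (W : Set α)
    (hW : ∀ u ∈ W, ∀ v ∈ W, u ≠ v →
      ∃ Q : Fin (ℓ + 1) → Set α,
        (∀ i, Q i ⊆ ({u, v} : Set α)ᶜ) ∧
        (Pairwise fun i j => Disjoint (Q i) (Q j)) ∧
        (Pairwise fun i j => ∀ a ∈ Q i, ∀ b ∈ Q j, ¬ G.Adj a b) ∧
        (∀ i, ConnectedIn G (Q i)) ∧
        (∀ i, ∃ a ∈ Q i, G.Adj u a) ∧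
        (∀ i, ∃ a ∈ Q i, G.Adj v a)) :
    ∃ x : τ, ∀ v ∈ W, (Wb x ∩ R v).Nonempty := by
  have hD : IsTreeDecomposition H T Wb := ⟨hT, hedges, hsubtree⟩
  have hadh' : ∀ x y, T.Adj x y → (Wb x ∩ Wb y).encard < ENat.card (Fin (ℓ + 1)) :=
    fun x y hxy => (hadh x y hxy).trans_lt <| by
      simpa using ENat.natCast_lt_natCast.2 ℓ.lt_succ_self
  have hpair :
      ∀ u ∈ W, ∀ v ∈ W, (bagsMeeting Wb (R u) ∩ bagsMeeting Wb (R v)).Nonempty := by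
    intro u hu v hv
    obtain rfl | huv := eq_or_ne u v
    · simpa using (hD.connectedIn_bagsMeeting (hRconn u)).nonempty
    obtain ⟨Q, -, hQdisj, hQanti, hQconn, hQu, hQv⟩ := hW u hu v hv huv
    refine hD.bagsMeeting_inter_nonempty hadh' (hRconn u) (hRconn v)
      (C := fun i => ⋃ a ∈ Q i, R a)
      (fun i => (hQconn i).biUnion_s10 (fun a _ => hRconn a) fun a _ b _ hab =>
        (hrig a b hab.ne).1 hab)
      (fun i j hij => disjoint_biUnion_of_forall_not_adj hrig (hQdisj hij) (hQanti hij))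
      (fun i => ?_) (fun i => ?_)
    · obtain ⟨a, ha, hua⟩ := hQu i
      exact biUnion_inter_nonempty_of_adj hrig ha hua
    · obtain ⟨a, ha, hva⟩ := hQv i
      exact biUnion_inter_nonempty_of_adj hrig ha hva
  exact hT.exists_mem_of_pairwise_inter_nonempty W.toFinite
    (fun v _ => hD.connectedIn_bagsMeeting (hRconn v)) hpair
end
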